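/- Under the hypotheses of the maximum principle for the phase (u a critical point of E_ε in a bounded simply connected domain ω, continuous on closure(ω), with dist(u,Γ) ≤ δ₁ on closure(ω)), if in addition u(∂ω) ⊆ Γ, then for every x ∈ ω: min over ∂ω of φ ≤ φ(x) − m t(x)²/2 ≤ φ(x) + m t(x)²/2 ≤ max over ∂ω of φ. In particular, min over ∂ω of φ ≤ φ(x) ≤ max over ∂ω of φ for all x ∈ closure(ω). -/

import Mathlib

open Complex Metric MeasureTheory Filter Set Topology Bornology

noncomputable section

/-- The Laplacian of a map `u : ℂ → ℂ`, viewing `ℂ ≅ ℝ²`. -/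
def lapC (u : ℂ → ℂ) (x : ℂ) : ℂ :=
  fderiv ℝ (fun y => fderiv ℝ u y 1) x 1 +
    fderiv ℝ (fun y => fderiv ℝ u y Complex.I) x Complex.I

/-- The Laplacian of a function `h : ℂ → ℝ`. -/
def lapR (h : ℂ → ℝ) (x : ℂ) : ℝ :=
  fderiv ℝ (fun y => fderiv ℝ h y 1) x 1 +
    fderiv ℝ (fun y => fderiv ℝ h y Complex.I) x Complex.I

/-- `|∇u|²` for `u : ℂ → ℂ`. -/
def gradSq (u : ℂ → ℂ) (x : ℂ) : ℝ :=
  ‖fderiv ℝ u x 1‖ ^ 2 + ‖fderiv ℝ u x Complex.I‖ ^ 2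

/-- The gradient `∇W` of a potential `W : ℂ → ℝ`, as a point of `ℂ ≅ ℝ²`. -/
def gradW (W : ℂ → ℝ) (x : ℂ) : ℂ :=
  (fderiv ℝ W x 1 : ℂ) + (fderiv ℝ W x Complex.I : ℂ) * Complex.I

/-- The Ginzburg–Landau type energy `E_ε(u) = ∫_Ω [½|∇u|² + W(u)/ε²]`. -/
def energy (W : ℂ → ℝ) (Ω : Set ℂ) (ε : ℝ) (u : ℂ → ℂ) : ℝ :=
  ∫ x in Ω, ((1 / 2) * gradSq u x + W (u x) / ε ^ 2)

/-- `Γ` is a smooth simple closed curve of length `2π`, with (`2π`-periodic) arclength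
parametrization `τ` (so that the point `τ(e^{is})` of the paper is `τ s` here). -/
structure ArcParam (Γ : Set ℂ) (τ : ℝ → ℂ) : Prop where
  smooth : ContDiff ℝ (⊤ : ℕ∞) τ
  periodic : Function.Periodic τ (2 * Real.pi)
  arclength : ∀ s, ‖deriv τ s‖ = 1
  inj : ∀ s t : ℝ, τ s = τ t → ∃ k : ℤ, s - t = 2 * Real.pi * k
  srange : Set.range τ = Γ

/-- The hypotheses (h1)–(h5) on the potential `W`: smooth, nonnegative, vanishing exactly
on `Γ`, non-degenerate near `Γ`, and radially coercive outside `B_{R₀} ⊇ Γ`. -/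
structure PotentialHyp (Γ : Set ℂ) (W : ℂ → ℝ) (R₀ : ℝ) : Prop where
  smooth : ContDiff ℝ (⊤ : ℕ∞) W
  nonneg : ∀ z, 0 ≤ W z
  zeros : W ⁻¹' {0} = Γ
  nondeg : ∃ μ > 0, ∃ δ > 0, ∀ z : ℂ,
    Metric.infDist z Γ < δ → μ * Metric.infDist z Γ ^ 2 ≤ W z
  R0_large : ∀ z ∈ Γ, ‖z‖ < R₀
  coercive : ∀ z : ℂ, R₀ < ‖z‖ →
    0 ≤ (gradW W z).re * z.re + (gradW W z).im * z.im

/-- `u` is a (globally smooth) solution of `Δu = ε⁻² ∇W(u)` in `Ω`. -/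
def SolvesGL (W : ℂ → ℝ) (Ω : Set ℂ) (ε : ℝ) (u : ℂ → ℂ) : Prop :=
  ContDiff ℝ (⊤ : ℕ∞) u ∧ ∀ x ∈ Ω, lapC u x = (ε ^ 2)⁻¹ • gradW W (u x)

/-- The decomposition `u = τ(e^{iφ}) + t·n⃗(τ(e^{iφ}))` on the set `s`, where `t` is the
signed distance of `u` to `Γ` and `φ` is a (global) phase; the unit normal to `Γ` at `τ s`
is `i·τ'(s)`. -/
def PhaseDecomp (Γ : Set ℂ) (τ : ℝ → ℂ) (s : Set ℂ) (u : ℂ → ℂ) (t φ : ℂ → ℝ) : Prop :=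
  ContinuousOn t s ∧ ContinuousOn φ s ∧
    ∀ x ∈ s, u x = τ (φ x) + (t x : ℂ) * (Complex.I * deriv τ (φ x)) ∧
      |t x| = Metric.infDist (u x) Γ

/-- `γ` is an `L`-periodic arclength parametrization of the (smooth) boundary of `Ω`. -/
structure BoundaryParam (Ω : Set ℂ) (γ : ℝ → ℂ) (L : ℝ) : Prop where
  Lpos : 0 < L
  smooth : ContDiff ℝ (⊤ : ℕ∞) γ
  periodic : Function.Periodic γ L
  arclength : ∀ s, ‖deriv γ s‖ = 1
  inj : ∀ s t : ℝ, γ s = γ t → ∃ k : ℤ, s - t = L * k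
  srange : Set.range γ = frontier Ω

/-- `n` is the outward unit normal field along the boundary parametrization `γ` of `Ω`. -/
structure OutwardNormal (Ω : Set ℂ) (γ : ℝ → ℂ) (n : ℝ → ℂ) : Prop where
  unit : ∀ s, ‖n s‖ = 1
  orth : ∀ s, (n s).re * (deriv γ s).re + (n s).im * (deriv γ s).im = 0
  outward : ∀ s, ∀ᶠ r in nhdsWithin (0 : ℝ) (Set.Ioi (0 : ℝ)), γ s + Complex.ofReal r * n s ∉ closure Ω

/-- The maximum principle for the phase (Proposition 2.2) holds with constants `δ₁`, `m`:
for every critical point `u` of `E_ε` on a bounded simply connected domain `ω`, continuous on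
`closure ω` and with `dist(u,Γ) ≤ δ₁` there, the functions `φ ∓ m t²/2` attain their
min/max on `∂ω`. -/
def MaxPrinciple (Γ : Set ℂ) (τ : ℝ → ℂ) (W : ℂ → ℝ) (δ₁ m : ℝ) : Prop :=
  ∀ (ω : Set ℂ) (ε : ℝ) (u : ℂ → ℂ) (t φ : ℂ → ℝ),
    IsOpen ω → Bornology.IsBounded ω → ω.Nonempty → SimplyConnectedSpace ↥ω →
    0 < ε → ContDiffOn ℝ (⊤ : ℕ∞) u ω → ContinuousOn u (closure ω) →
    (∀ x ∈ ω, lapC u x = (ε ^ 2)⁻¹ • gradW W (u x)) →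
    (∀ x ∈ closure ω, Metric.infDist (u x) Γ ≤ δ₁) →
    PhaseDecomp Γ τ (closure ω) u t φ →
    sInf ((fun x => φ x - m * t x ^ 2 / 2) '' closure ω) =
        sInf ((fun x => φ x - m * t x ^ 2 / 2) '' frontier ω) ∧
      sSup ((fun x => φ x + m * t x ^ 2 / 2) '' closure ω) =
        sSup ((fun x => φ x + m * t x ^ 2 / 2) '' frontier ω)

/-! On `∂ω` we have `u ∈ Γ`, hence `t = 0`, so `φ ∓ m t²/2` agree with `φ` there. The maximum
principle then bounds `φ - m t²/2` below and `φ + m t²/2` above on the compact set `closure ω` by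
the extremes of `φ` over `∂ω`, and `m t² ≥ 0` squeezes `φ` in between. -/

theorem csInf_image_le_of_isCompact {α β : Type*} [TopologicalSpace β]
    [ConditionallyCompleteLinearOrder α] [TopologicalSpace α] [ClosedIicTopology α]
    {f : β → α} {K B : Set β} (hK : IsCompact K) (hf : ContinuousOn f K)
    (hKB : sInf (f '' K) = sInf (f '' B)) {x : β} (hx : x ∈ K) :
    sInf (f '' B) ≤ f x :=
  haveI : Nonempty α := ⟨f x⟩
  hKB ▸ csInf_le (hK.bddBelow_image hf) (mem_image_of_mem f hx)

theorem le_csSup_image_of_isCompact {α β : Type*} [TopologicalSpace β]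
    [ConditionallyCompleteLinearOrder α] [TopologicalSpace α] [ClosedIciTopology α]
    {f : β → α} {K B : Set β} (hK : IsCompact K) (hf : ContinuousOn f K)
    (hKB : sSup (f '' K) = sSup (f '' B)) {x : β} (hx : x ∈ K) :
    f x ≤ sSup (f '' B) :=
  haveI : Nonempty α := ⟨f x⟩
  hKB ▸ le_csSup (hK.bddAbove_image hf) (mem_image_of_mem f hx)

theorem PhaseDecomp.eq_zero_of_mem {Γ : Set ℂ} {τ : ℝ → ℂ} {s : Set ℂ} {u : ℂ → ℂ}
    {t φ : ℂ → ℝ} (h : PhaseDecomp Γ τ s u t φ) {x : ℂ} (hx : x ∈ s) (hux : u x ∈ Γ) :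
    t x = 0 :=
  abs_eq_zero.mp ((h.2.2 x hx).2.trans (infDist_zero_of_mem hux))

theorem corollary_of_max_principle_general
    (Γ : Set ℂ) (τ : ℝ → ℂ) (W : ℂ → ℝ)
    (δ₁ m : ℝ) (hm : 0 < m)
    (hmax : MaxPrinciple Γ τ W δ₁ m)
    (ω : Set ℂ) (hωo : IsOpen ω) (hωb : Bornology.IsBounded ω) (hωne : ω.Nonempty)
    (hωsc : SimplyConnectedSpace ↥ω)
    (ε : ℝ) (hε : 0 < ε) (u : ℂ → ℂ) (t φ : ℂ → ℝ)
    (hu : ContDiffOn ℝ (⊤ : ℕ∞) u ω) (huc : ContinuousOn u (closure ω))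
    (hpde : ∀ x ∈ ω, lapC u x = (ε ^ 2)⁻¹ • gradW W (u x))
    (hdist : ∀ x ∈ closure ω, Metric.infDist (u x) Γ ≤ δ₁)
    (hdec : PhaseDecomp Γ τ (closure ω) u t φ)
    (hbdry : ∀ x ∈ frontier ω, u x ∈ Γ) :
    (∀ x ∈ ω,
        sInf (φ '' frontier ω) ≤ φ x - m * t x ^ 2 / 2 ∧
        φ x - m * t x ^ 2 / 2 ≤ φ x + m * t x ^ 2 / 2 ∧
        φ x + m * t x ^ 2 / 2 ≤ sSup (φ '' frontier ω)) ∧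
      ∀ x ∈ closure ω, sInf (φ '' frontier ω) ≤ φ x ∧ φ x ≤ sSup (φ '' frontier ω) := by
  obtain ⟨hinf, hsup⟩ := hmax ω ε u t φ hωo hωb hωne hωsc hε hu huc hpde hdist hdec
  have hK : IsCompact (closure ω) := hωb.isCompact_closure
  have ht0 : ∀ x ∈ frontier ω, t x = 0 := fun x hx =>
    hdec.eq_zero_of_mem (frontier_subset_closure hx) (hbdry x hx)
  have himage_sub : (fun x => φ x - m * t x ^ 2 / 2) '' frontier ω = φ '' frontier ω :=
    image_congr fun x hx => by simp [ht0 x hx]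
  have himage_add : (fun x => φ x + m * t x ^ 2 / 2) '' frontier ω = φ '' frontier ω :=
    image_congr fun x hx => by simp [ht0 x hx]
  obtain ⟨ht, hφ, -⟩ := hdec
  have hlow : ∀ x ∈ closure ω, sInf (φ '' frontier ω) ≤ φ x - m * t x ^ 2 / 2 :=
    fun x hx => himage_sub ▸ csInf_image_le_of_isCompact hK (by fun_prop) hinf hx
  have hup : ∀ x ∈ closure ω, φ x + m * t x ^ 2 / 2 ≤ sSup (φ '' frontier ω) :=
    fun x hx => himage_add ▸ le_csSup_image_of_isCompact hK (by fun_prop) hsup hx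
  have hsq : ∀ x, 0 ≤ m * t x ^ 2 / 2 := fun x => by positivity
  refine ⟨fun x hx => ?_, fun x hx => ?_⟩
  · have := hsq x
    exact ⟨hlow x (subset_closure hx), by linarith, hup x (subset_closure hx)⟩
  · have := hlow x hx; have := hup x hx; have := hsq x
    constructor <;> linarith

/-- Corollary 2.3: under the hypotheses of the maximum principle for the
phase, if moreover `u(∂ω) ⊆ Γ`, then for every `x ∈ ω`,
`min_{∂ω} φ ≤ φ(x) - m t(x)²/2 ≤ φ(x) + m t(x)²/2 ≤ max_{∂ω} φ`; in particular
`min_{∂ω} φ ≤ φ(x) ≤ max_{∂ω} φ` on `closure ω`. -/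
theorem corollary_of_max_principle
    (Γ : Set ℂ) (τ : ℝ → ℂ) (W : ℂ → ℝ) (R₀ : ℝ)
    (hΓ : ArcParam Γ τ) (hW : PotentialHyp Γ W R₀)
    (δ₁ m : ℝ) (hδ₁ : 0 < δ₁) (hm : 0 < m)
    (hmax : MaxPrinciple Γ τ W δ₁ m)
    (ω : Set ℂ) (hωo : IsOpen ω) (hωb : Bornology.IsBounded ω) (hωne : ω.Nonempty)
    (hωsc : SimplyConnectedSpace ↥ω)
    (ε : ℝ) (hε : 0 < ε) (u : ℂ → ℂ) (t φ : ℂ → ℝ)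
    (hu : ContDiffOn ℝ (⊤ : ℕ∞) u ω) (huc : ContinuousOn u (closure ω))
    (hpde : ∀ x ∈ ω, lapC u x = (ε ^ 2)⁻¹ • gradW W (u x))
    (hdist : ∀ x ∈ closure ω, Metric.infDist (u x) Γ ≤ δ₁)
    (hdec : PhaseDecomp Γ τ (closure ω) u t φ)
    (hbdry : ∀ x ∈ frontier ω, u x ∈ Γ) :
    (∀ x ∈ ω,
        sInf (φ '' frontier ω) ≤ φ x - m * t x ^ 2 / 2 ∧
        φ x - m * t x ^ 2 / 2 ≤ φ x + m * t x ^ 2 / 2 ∧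
        φ x + m * t x ^ 2 / 2 ≤ sSup (φ '' frontier ω)) ∧
      ∀ x ∈ closure ω, sInf (φ '' frontier ω) ≤ φ x ∧ φ x ≤ sSup (φ '' frontier ω) :=
  corollary_of_max_principle_general Γ τ W δ₁ m hm hmax ω hωo hωb hωne hωsc ε hε u t φ hu huc hpde
    hdist hdec hbdry
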